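/- Let b : ℝ³ → ℝ³ be smooth (C^∞), compactly supported, and divergence-free (∂₁b₁ + ∂₂b₂ + ∂₃b₃ = 0). Then ∑_{k=1}^{3} ∫_{ℝ³} ( −∂ₖb₃ ∂₃b₁ ∂ₖ∂₂b₃ + ∂ₖb₃ ∂₃b₂ ∂ₖ∂₁b₃ ) dx = ∑_{k=1}^{3} ∫_{ℝ³} ( ∂₁b₂ − ∂₂b₁ ) ∂ₖb₃ ∂ₖ∂₃b₃ dx. (This is the identity underlying the estimate of the terms VI_{k,3} + VI_{k,7} in the proof of the 3-D global well-posedness theorem, obtained by integration by parts and the substitution ∂₃b₃ = −∂₁b₁ − ∂₂b₂.) -/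

import Mathlib

open MeasureTheory

set_option maxHeartbeats 1000000
set_option linter.unusedVariables false

/-- Partial derivative in the `i`-th coordinate direction of `ℝ³`. -/
noncomputable def pd (i : Fin 3) (f : (Fin 3 → ℝ) → ℝ) (x : Fin 3 → ℝ) : ℝ :=
  fderiv ℝ f x (Pi.single i 1)

lemma pd_contDiff {f : (Fin 3 → ℝ) → ℝ} (hf : ContDiff ℝ (⊤ : ℕ∞) f) (i : Fin 3) :
    ContDiff ℝ (⊤ : ℕ∞) (pd i f) :=
  (hf.fderiv_right (m := (⊤ : ℕ∞)) (by simp)).clm_apply contDiff_const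

lemma pd_hcs {f : (Fin 3 → ℝ) → ℝ} (hf : HasCompactSupport f) (i : Fin 3) :
    HasCompactSupport (pd i f) :=
  (hf.fderiv ℝ).comp_left (g := fun L : (Fin 3 → ℝ) →L[ℝ] ℝ => L (Pi.single i 1)) rfl

lemma pd_comm {f : (Fin 3 → ℝ) → ℝ} (hf : ContDiff ℝ (⊤ : ℕ∞) f) (i j : Fin 3)
    (x : Fin 3 → ℝ) : pd i (pd j f) x = pd j (pd i f) x := by
  have hd : DifferentiableAt ℝ (fderiv ℝ f) x :=
    ((hf.fderiv_right (m := (⊤ : ℕ∞)) (by simp)).differentiable (by simp)).differentiableAt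
  have key : ∀ v w : Fin 3 → ℝ,
      fderiv ℝ (fun y => fderiv ℝ f y w) x v = fderiv ℝ (fderiv ℝ f) x v w := by
    intro v w
    rw [fderiv_clm_apply hd (differentiableAt_const _)]
    simp
  have hsymm : IsSymmSndFDerivAt ℝ f x :=
    hf.contDiffAt.isSymmSndFDerivAt (by rw [minSmoothness_of_isRCLikeNormedField]; exact WithTop.coe_le_coe.2 le_top)
  show fderiv ℝ (pd j f) x (Pi.single i 1) = fderiv ℝ (pd i f) x (Pi.single j 1)
  have h1 : pd j f = fun y => fderiv ℝ f y (Pi.single j 1) := rfl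
  have h2 : pd i f = fun y => fderiv ℝ f y (Pi.single i 1) := rfl
  rw [h1, h2, key, key, hsymm.eq]

lemma ibp {h w : (Fin 3 → ℝ) → ℝ} (hh : ContDiff ℝ (⊤ : ℕ∞) h) (hhs : HasCompactSupport h)
    (hw : ContDiff ℝ (⊤ : ℕ∞) w) (i : Fin 3) :
    ∫ x, h x * pd i w x = - ∫ x, pd i h x * w x := by
  have hcw : Continuous (pd i w) := (pd_contDiff hw i).continuous
  have hch : Continuous (pd i h) := (pd_contDiff hh i).continuous
  apply integral_mul_fderiv_eq_neg_fderiv_mul_of_integrable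
  · exact (hch.mul hw.continuous).integrable_of_hasCompactSupport ((pd_hcs hhs i).mul_right)
  · exact (hh.continuous.mul hcw).integrable_of_hasCompactSupport (hhs.mul_right)
  · exact (hh.continuous.mul hw.continuous).integrable_of_hasCompactSupport (hhs.mul_right)
  · exact fun x _ => hh.differentiable (by simp) x
  · exact fun x _ => hw.differentiable (by simp) x

lemma key {g h : (Fin 3 → ℝ) → ℝ} (hg : ContDiff ℝ (⊤ : ℕ∞) g) (hgs : HasCompactSupport g)
    (hh : ContDiff ℝ (⊤ : ℕ∞) h) (hhs : HasCompactSupport h) (i : Fin 3) :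
    ∫ x, g x * h x * pd i g x = -(1/2) * ∫ x, pd i h x * (g x * g x) := by
  have hq : ContDiff ℝ (⊤ : ℕ∞) (fun y => g y * g y) := hg.mul hg
  have hqs : HasCompactSupport (fun y => g y * g y) :=
    (hgs.mul_right : HasCompactSupport fun y => g y * g y)
  have hpd : ∀ x, pd i (fun y => g y * g y) x = 2 * (g x * pd i g x) := by
    intro x
    have hd : DifferentiableAt ℝ g x := (hg.differentiable (by simp)).differentiableAt
    show fderiv ℝ (fun y => g y * g y) x (Pi.single i 1) = _
    rw [fderiv_fun_mul hd hd]
    simp only [ContinuousLinearMap.add_apply, ContinuousLinearMap.coe_smul', Pi.smul_apply,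
      smul_eq_mul, pd]
    ring
  have hfe : (fun x => g x * h x * pd i g x)
      = fun x => (1/2 : ℝ) * (h x * pd i (fun y => g y * g y) x) := by
    funext x; rw [hpd]; ring
  rw [show (∫ x, g x * h x * pd i g x)
      = ∫ x, (1/2 : ℝ) * (h x * pd i (fun y => g y * g y) x) from by rw [hfe],
    integral_const_mul, ibp hh hhs hq i]
  ring

lemma pd_sub {u v : (Fin 3 → ℝ) → ℝ} (hu : ContDiff ℝ (⊤ : ℕ∞) u) (hv : ContDiff ℝ (⊤ : ℕ∞) v)
    (i : Fin 3) (x : Fin 3 → ℝ) : pd i (fun y => u y - v y) x = pd i u x - pd i v x := by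
  show fderiv ℝ (fun y => u y - v y) x (Pi.single i 1) = _
  rw [fderiv_fun_sub (hu.differentiable (by simp)).differentiableAt
    (hv.differentiable (by simp)).differentiableAt]
  rfl

/-- The identity underlying the estimate of `VI_{k,3} + VI_{k,7}`:
for `b : ℝ³ → ℝ³` smooth, compactly supported, and divergence-free,
`∑ₖ ∫ (−∂ₖb₃ ∂₃b₁ ∂ₖ∂₂b₃ + ∂ₖb₃ ∂₃b₂ ∂ₖ∂₁b₃) dx
  = ∑ₖ ∫ (∂₁b₂ − ∂₂b₁) ∂ₖb₃ ∂ₖ∂₃b₃ dx`. -/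
theorem VI_k3_VI_k7_identity (b : (Fin 3 → ℝ) → (Fin 3 → ℝ))
    (hsmooth : ContDiff ℝ (⊤ : ℕ∞) b) (hsupp : HasCompactSupport b)
    (hdiv : ∀ x, pd 0 (fun y => b y 0) x + pd 1 (fun y => b y 1) x
      + pd 2 (fun y => b y 2) x = 0) :
    ∑ k : Fin 3, ∫ x,
        (-(pd k (fun y => b y 2) x) * pd 2 (fun y => b y 0) x
            * pd k (pd 1 (fun y => b y 2)) x
          + pd k (fun y => b y 2) x * pd 2 (fun y => b y 1) x
            * pd k (pd 0 (fun y => b y 2)) x)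
      = ∑ k : Fin 3, ∫ x,
          (pd 0 (fun y => b y 1) x - pd 1 (fun y => b y 0) x)
            * pd k (fun y => b y 2) x * pd k (pd 2 (fun y => b y 2)) x := by
  have hb : ∀ j : Fin 3, ContDiff ℝ (⊤ : ℕ∞) (fun y => b y j) := fun j => contDiff_pi.1 hsmooth j
  have hbs : ∀ j : Fin 3, HasCompactSupport (fun y => b y j) := fun j =>
    hsupp.comp_left (g := fun v : Fin 3 → ℝ => v j) rfl
  have hf := hb 2
  have hfs := hbs 2
  have hh0 := pd_contDiff (hb 0) 2
  have hh0s := pd_hcs (hbs 0) 2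
  have hh1 := pd_contDiff (hb 1) 2
  have hh1s := pd_hcs (hbs 1) 2
  have hh2 : ContDiff ℝ (⊤ : ℕ∞)
      (fun x => pd 0 (fun y => b y 1) x - pd 1 (fun y => b y 0) x) :=
    (pd_contDiff (hb 1) 0).sub (pd_contDiff (hb 0) 1)
  have hh2s : HasCompactSupport
      (fun x => pd 0 (fun y => b y 1) x - pd 1 (fun y => b y 0) x) :=
    (pd_hcs (hbs 1) 0).comp₂_left (pd_hcs (hbs 0) 1) (sub_zero 0)
  refine Finset.sum_congr rfl fun k _ => ?_
  have hg := pd_contDiff hf k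
  have hgs := pd_hcs hfs k
  have hgc := hg.continuous
  -- rewrite the LHS integrand
  have e1 : (fun x => -(pd k (fun y => b y 2) x) * pd 2 (fun y => b y 0) x
        * pd k (pd 1 (fun y => b y 2)) x
      + pd k (fun y => b y 2) x * pd 2 (fun y => b y 1) x
        * pd k (pd 0 (fun y => b y 2)) x)
      = fun x => -(pd k (fun y => b y 2) x * pd 2 (fun y => b y 0) x
            * pd 1 (pd k (fun y => b y 2)) x)
        + pd k (fun y => b y 2) x * pd 2 (fun y => b y 1) x
            * pd 0 (pd k (fun y => b y 2)) x := by
    funext x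
    rw [pd_comm hf k 1 x, pd_comm hf k 0 x]
    ring
  have I0 : Integrable (fun x => -(pd k (fun y => b y 2) x * pd 2 (fun y => b y 0) x
      * pd 1 (pd k (fun y => b y 2)) x)) :=
    (((hgc.mul hh0.continuous).mul
      (pd_contDiff hg 1).continuous).integrable_of_hasCompactSupport
      (hgs.mul_right.mul_right)).neg
  have I1 : Integrable (fun x => pd k (fun y => b y 2) x * pd 2 (fun y => b y 1) x
      * pd 0 (pd k (fun y => b y 2)) x) :=
    ((hgc.mul hh1.continuous).mul (pd_contDiff hg 0).continuous).integrable_of_hasCompactSupport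
      (hgs.mul_right.mul_right)
  rw [e1, integral_add I0 I1, integral_neg,
    key hg hgs hh0 hh0s 1, key hg hgs hh1 hh1s 0]
  -- rewrite the RHS integrand
  have e2 : (fun x => (pd 0 (fun y => b y 1) x - pd 1 (fun y => b y 0) x)
        * pd k (fun y => b y 2) x * pd k (pd 2 (fun y => b y 2)) x)
      = fun x => pd k (fun y => b y 2) x
          * (pd 0 (fun y => b y 1) x - pd 1 (fun y => b y 0) x)
          * pd 2 (pd k (fun y => b y 2)) x := by
    funext x
    rw [pd_comm hf k 2 x]
    ring
  rw [e2, key hg hgs hh2 hh2s 2]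
  have e3 : (fun x => pd 2 (fun x => pd 0 (fun y => b y 1) x - pd 1 (fun y => b y 0) x) x
        * (pd k (fun y => b y 2) x * pd k (fun y => b y 2) x))
      = fun x => pd 0 (pd 2 (fun y => b y 1)) x
            * (pd k (fun y => b y 2) x * pd k (fun y => b y 2) x)
          - pd 1 (pd 2 (fun y => b y 0)) x
            * (pd k (fun y => b y 2) x * pd k (fun y => b y 2) x) := by
    funext x
    rw [pd_sub (pd_contDiff (hb 1) 0) (pd_contDiff (hb 0) 1) 2 x,
      pd_comm (hb 1) 2 0 x, pd_comm (hb 0) 2 1 x]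
    ring
  have Ia : Integrable (fun x => pd 0 (pd 2 (fun y => b y 1)) x
      * (pd k (fun y => b y 2) x * pd k (fun y => b y 2) x)) :=
    ((pd_contDiff hh1 0).continuous.mul (hgc.mul hgc)).integrable_of_hasCompactSupport
      ((hgs.mul_right).mul_left)
  have Ib : Integrable (fun x => pd 1 (pd 2 (fun y => b y 0)) x
      * (pd k (fun y => b y 2) x * pd k (fun y => b y 2) x)) :=
    ((pd_contDiff hh0 1).continuous.mul (hgc.mul hgc)).integrable_of_hasCompactSupport
      ((hgs.mul_right).mul_left)
  rw [e3, integral_sub Ia Ib]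
  ring
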